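/- Let l, T > 0, N, j₀ ∈ ℕ with N ≥ 2, h = l/N, τ = T/j₀, grid points x_i = ih and t_j = jτ. Let α : {0,…,N} → (0,1) with α_i = α(x_i), let c₁ > 0, and for each time level j let coefficients a_i^{j+1/2} (1 ≤ i ≤ N) satisfy a_i^{j+1/2} ≥ c₁, d_i^{j+1/2} ≥ 0 (1 ≤ i ≤ N−1), and let φ_i^{j+1/2} be given (1 ≤ i ≤ N−1). Suppose σ ≥ 1/(3 − 2^{1−min_i α_i}) and σ ≤ 1, and y_i^j solves the difference scheme Δ_{0t_j}^{α_i} y_i = (Λ(σ y^{j+1} + (1−σ)y^j))_i + φ_i^{j+1/2} for 1 ≤ i ≤ N−1 and 0 ≤ j ≤ j₀−1, with y_0^j = y_N^j = 0 for all j and y_i^0 = u₀(x_i). Then for every 0 ≤ j ≤ j₀−1: ( (1/Γ(2−α_i)) , Σ_{j'=0}^{j} (t_{j−j'+1}^{1−α_i} − t_{j−j'}^{1−α_i}) (y^{j'+1})² ) + c₁ Σ_{j'=0}^{j} ‖σ y_x̄^{j'+1} + (1−σ) y_x̄^{j'}‖₀'² · τ ≤ (l²/(2c₁)) Σ_{j'=0}^{j}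 ‖φ^{j'}‖₀² · τ + ( t_{j+1}^{1−α_i}/Γ(2−α_i) , u₀²(x_i) ). -/

import Mathlib

/-!
Energy method. Multiply the scheme at level `j` by `2 v`, `v = σ y^{j+1} + (1 - σ) y^j`, and
sum over the grid. The L1 weights `c_k = t_{k+1}^{1-α} - t_k^{1-α}` are nonnegative and
nonincreasing (concavity of `t ↦ t^{1-α}`) with `c_1 / c_0 = 2^{1-α} - 1`, so the condition on `σ`
gives `σ² c_1 ≤ (2σ - 1) c_0`. Under it, Abel summation of `c_{j-s}` against `(v - y^s)² / 2`
yields Alikhanov's inequality `Δ^α (y²) ≤ 2 v Δ^α y`. In space, summation by parts gives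
`-(Λv, v) ≥ c₁ ‖v_x̄]|²`, and Young's inequality together with the discrete Friedrichs inequality
`‖v‖₀² ≤ (l² / 2) ‖v_x̄]|²` absorbs `2 (φ, v)`. Summed over the time levels, the Caputo sums of
`y²` telescope to the left-hand side minus the initial term.
-/

/-- The discrete analogue of the Caputo fractional derivative of order `α`
on the uniform grid `t_j = jτ`:
`Δ_{0t_j}^α y = (1/Γ(2-α)) Σ_{s=0}^{j} (t_{j-s+1}^{1-α} − t_{j-s}^{1-α}) (y^{s+1} − y^s)/τ`. -/
noncomputable def dCaputo (α τ : ℝ) (y : ℕ → ℝ) (j : ℕ) : ℝ :=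
  (1 / Real.Gamma (2 - α)) *
    ∑ s ∈ Finset.range (j + 1),
      (((((j : ℕ) - s + 1 : ℕ) : ℝ) * τ) ^ (1 - α) -
        ((((j : ℕ) - s : ℕ) : ℝ) * τ) ^ (1 - α)) * (y (s + 1) - y s) / τ

open Finset

/-- The weight `t_{k+1}^{1-α} - t_k^{1-α}`, `t_k = kτ`, of the L1 formula `dCaputo`. -/
noncomputable def caputoWeight (α τ : ℝ) (k : ℕ) : ℝ :=
  (((k + 1 : ℕ) : ℝ) * τ) ^ (1 - α) - ((k : ℝ) * τ) ^ (1 - α)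

section CaputoWeight

variable {α τ : ℝ}

theorem caputoWeight_nonneg (hτ : 0 ≤ τ) (hα : α ≤ 1) (k : ℕ) : 0 ≤ caputoWeight α τ k :=
  sub_nonneg.2 <| Real.rpow_le_rpow (by positivity)
    (mul_le_mul_of_nonneg_right (by exact_mod_cast k.le_succ) hτ) (by linarith)

theorem caputoWeight_antitone (hτ : 0 ≤ τ) (hα₀ : 0 ≤ α) (hα₁ : α ≤ 1) :
    Antitone (caputoWeight α τ) := by
  refine antitone_nat_of_succ_le fun k => ?_
  -- concavity of `t ↦ t ^ (1 - α)` at the midpoint `(k + 1) τ` of `k τ` and `(k + 2) τ`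
  have hmid := (Real.concaveOn_rpow (p := 1 - α) (by linarith) (by linarith)).2
    (Set.mem_Ici.2 (by positivity : (0 : ℝ) ≤ k * τ))
    (Set.mem_Ici.2 (by positivity : (0 : ℝ) ≤ (k + 2) * τ))
    (by norm_num : (0 : ℝ) ≤ 1 / 2) (by norm_num : (0 : ℝ) ≤ 1 / 2) (by norm_num)
  simp only [smul_eq_mul] at hmid
  rw [show (1 / 2 : ℝ) * (k * τ) + 1 / 2 * ((k + 2) * τ) = (k + 1) * τ by ring] at hmid
  simp only [caputoWeight]
  push_cast
  rw [show (k : ℝ) + 1 + 1 = k + 2 by ring]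
  linarith

theorem sum_range_caputoWeight (hα : α ≠ 1) (n : ℕ) :
    ∑ k ∈ range n, caputoWeight α τ k = ((n : ℝ) * τ) ^ (1 - α) := by
  simp only [caputoWeight]
  rw [sum_range_sub (fun k : ℕ => ((k : ℝ) * τ) ^ (1 - α))]
  simp [Real.zero_rpow (sub_ne_zero.2 hα.symm)]

theorem caputoWeight_zero (hα : α ≠ 1) : caputoWeight α τ 0 = τ ^ (1 - α) := by
  simp [caputoWeight, Real.zero_rpow (sub_ne_zero.2 hα.symm)]

theorem caputoWeight_one (hτ : 0 ≤ τ) :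
    caputoWeight α τ 1 = (2 ^ (1 - α) - 1) * τ ^ (1 - α) := by
  simp only [caputoWeight]
  norm_num
  rw [Real.mul_rpow zero_le_two hτ]
  ring

theorem sq_mul_caputoWeight_one_le (hτ : 0 ≤ τ) (hα : α ≠ 1) {σ : ℝ}
    (hσ : (2 ^ (1 - α) - 1) * σ ^ 2 ≤ 2 * σ - 1) :
    σ ^ 2 * caputoWeight α τ 1 ≤ (2 * σ - 1) * caputoWeight α τ 0 := by
  rw [caputoWeight_zero hα, caputoWeight_one hτ]
  nlinarith [mul_le_mul_of_nonneg_right hσ (Real.rpow_nonneg hτ (1 - α))]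

end CaputoWeight

theorem two_rpow_sub_one_mul_sq_le {α β σ : ℝ} (hβ : 0 < β) (hβα : β ≤ α) (hα : α ≤ 1)
    (hσ₁ : 1 / (3 - (2 : ℝ) ^ (1 - β)) ≤ σ) (hσ₂ : σ ≤ 1) :
    (2 ^ (1 - α) - 1) * σ ^ 2 ≤ 2 * σ - 1 := by
  have hx₁ : 1 ≤ (2 : ℝ) ^ (1 - α) := Real.one_le_rpow one_le_two (by linarith)
  have hxβ : (2 : ℝ) ^ (1 - α) ≤ 2 ^ (1 - β) :=
    Real.rpow_le_rpow_of_exponent_le one_le_two (by linarith)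
  have hβ₂ : (2 : ℝ) ^ (1 - β) < 2 := by
    simpa using Real.rpow_lt_rpow_of_exponent_lt one_lt_two (by linarith : 1 - β < 1)
  have hσβ : 1 ≤ σ * (3 - 2 ^ (1 - β)) := (div_le_iff₀ (by linarith)).1 hσ₁
  set x : ℝ := 2 ^ (1 - α)
  have hσ₀ : 0 ≤ σ := by nlinarith
  have hσx : 1 ≤ σ * (3 - x) := by nlinarith
  nlinarith [mul_nonneg (sub_nonneg.2 hσ₂) (by nlinarith : (0 : ℝ) ≤ 2 * σ - 1)]

theorem mul_sub_le_sum_range_antitone_mul_sub {c G : ℕ → ℝ} (hc : Antitone c)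
    (hG : ∀ s, 0 ≤ G s) (j : ℕ) :
    c (j + 1) * G 0 - c 1 * G j ≤ ∑ s ∈ range j, c (j - s) * (G s - G (s + 1)) := by
  induction j generalizing G with
  | zero => simp
  | succ j ih =>
    have hshift := ih (G := fun s => G (s + 1)) fun s => hG (s + 1)
    rw [sum_range_succ']
    simp only [Nat.add_sub_add_right, Nat.sub_zero] at hshift ⊢
    linarith [mul_le_mul_of_nonneg_right (hc (j + 1).le_succ) (hG 0)]

/-- Alikhanov's inequality. -/
theorem sum_antitone_mul_sq_sub_le {c : ℕ → ℝ} (hc₀ : ∀ k, 0 ≤ c k) (hc : Antitone c) {σ : ℝ}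
    (hσ : σ ^ 2 * c 1 ≤ (2 * σ - 1) * c 0) (y : ℕ → ℝ) (j : ℕ) :
    ∑ s ∈ range (j + 1), c (j - s) * (y (s + 1) ^ 2 - y s ^ 2) ≤
      2 * (σ * y (j + 1) + (1 - σ) * y j) * ∑ s ∈ range (j + 1), c (j - s) * (y (s + 1) - y s) := by
  set w := σ * y (j + 1) + (1 - σ) * y j
  have hgap : 2 * w * ∑ s ∈ range (j + 1), c (j - s) * (y (s + 1) - y s) -
      ∑ s ∈ range (j + 1), c (j - s) * (y (s + 1) ^ 2 - y s ^ 2) =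
      2 * ∑ s ∈ range (j + 1), c (j - s) * ((w - y s) ^ 2 / 2 - (w - y (s + 1)) ^ 2 / 2) := by
    rw [mul_sum, mul_sum, ← sum_sub_distrib]
    exact sum_congr rfl fun s _ => by ring
  have hG := mul_sub_le_sum_range_antitone_mul_sub hc (G := fun s => (w - y s) ^ 2 / 2)
    (fun s => by positivity) j
  have hwj : w - y j = σ * (y (j + 1) - y j) := by ring
  have hwj₁ : w - y (j + 1) = (σ - 1) * (y (j + 1) - y j) := by ring
  rw [sum_range_succ (fun s => c (j - s) * ((w - y s) ^ 2 / 2 - (w - y (s + 1)) ^ 2 / 2)),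
    Nat.sub_self, hwj, hwj₁] at hgap
  rw [hwj] at hG
  nlinarith [mul_nonneg (hc₀ (j + 1)) (by positivity : 0 ≤ (w - y 0) ^ 2 / 2),
    mul_le_mul_of_nonneg_right hσ (sq_nonneg (y (j + 1) - y j))]

theorem sum_range_sum_range_mul_sub {R : Type*} [CommRing R] (c W : ℕ → R) (j : ℕ) :
    ∑ j' ∈ range (j + 1), ∑ s ∈ range (j' + 1), c (j' - s) * (W (s + 1) - W s) =
      ∑ s ∈ range (j + 1), c (j - s) * W (s + 1) - (∑ k ∈ range (j + 1), c k) * W 0 := by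
  induction j with
  | zero => simp [mul_sub]
  | succ j ih =>
    have hshift : ∑ s ∈ range (j + 2), c (j + 1 - s) * W s =
        ∑ s ∈ range (j + 1), c (j - s) * W (s + 1) + c (j + 1) * W 0 := by
      simp only [sum_range_succ' _ (j + 1), Nat.add_sub_add_right, Nat.sub_zero]
    rw [sum_range_succ, ih, sum_range_succ c (j + 1)]
    simp only [mul_sub, sum_sub_distrib]
    rw [hshift]
    ring

theorem dCaputo_eq (α τ : ℝ) (y : ℕ → ℝ) (j : ℕ) :
    dCaputo α τ y j = (∑ s ∈ range (j + 1), caputoWeight α τ (j - s) * (y (s + 1) - y s)) /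
      (τ * Real.Gamma (2 - α)) := by
  simp only [dCaputo, caputoWeight, mul_sum, sum_div]
  exact sum_congr rfl fun s _ => by ring

theorem dCaputo_sq_le {α τ σ : ℝ} (hτ : 0 < τ) (hα₀ : 0 ≤ α) (hα₁ : α < 1)
    (hσ : σ ^ 2 * caputoWeight α τ 1 ≤ (2 * σ - 1) * caputoWeight α τ 0) (y : ℕ → ℝ) (j : ℕ) :
    dCaputo α τ (fun s => y s ^ 2) j ≤ 2 * ((σ * y (j + 1) + (1 - σ) * y j) * dCaputo α τ y j) := by
  have hτΓ : 0 < τ * Real.Gamma (2 - α) := mul_pos hτ (Real.Gamma_pos_of_pos (by linarith))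
  rw [dCaputo_eq, dCaputo_eq, mul_div_assoc', mul_div_assoc', div_le_div_iff_of_pos_right hτΓ]
  linarith [sum_antitone_mul_sq_sub_le (caputoWeight_nonneg hτ.le hα₁.le)
    (caputoWeight_antitone hτ.le hα₀ hα₁.le) hσ y j]

theorem mul_sum_range_dCaputo {α τ : ℝ} (hτ : τ ≠ 0) (hα : α ≠ 1) (W : ℕ → ℝ) (j : ℕ) :
    τ * ∑ j' ∈ range (j + 1), dCaputo α τ W j' =
      (∑ s ∈ range (j + 1), caputoWeight α τ (j - s) * W (s + 1) -
        (((j + 1 : ℕ) : ℝ) * τ) ^ (1 - α) * W 0) / Real.Gamma (2 - α) := by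
  simp only [dCaputo_eq]
  rw [← sum_div, mul_div_assoc', mul_div_mul_left _ _ hτ, sum_range_sum_range_mul_sub,
    sum_range_caputoWeight hα]

section Grid

variable {N : ℕ}

theorem sum_Icc_one_eq_sum_range {M : Type*} [AddCommMonoid M] (f : ℕ → M) :
    ∑ i ∈ Icc 1 N, f i = ∑ k ∈ range N, f (k + 1) := by
  rw [← Ico_add_one_right_eq_Icc, sum_Ico_eq_sum_range]
  simp [add_comm]

theorem sum_Icc_one_sub_one_eq_sum_range {M : Type*} [AddCommMonoid M] {f : ℕ → M}
    (hf : f 0 = 0) : ∑ i ∈ Icc 1 (N - 1), f i = ∑ i ∈ range N, f i := by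
  rcases N with _ | n
  · simp
  · rw [sum_range_succ', hf, add_zero, Nat.add_sub_cancel, sum_Icc_one_eq_sum_range]

theorem sum_Icc_mul_sub_eq_neg {R : Type*} [CommRing R] {v : ℕ → R} (hv₀ : v 0 = 0)
    (hvN : v N = 0) (b : ℕ → R) :
    ∑ i ∈ Icc 1 (N - 1), v i * (b (i + 1) - b i) = -∑ i ∈ Icc 1 N, b i * (v i - v (i - 1)) := by
  rw [sum_Icc_one_sub_one_eq_sum_range (by simp [hv₀]), sum_Icc_one_eq_sum_range,
    eq_neg_iff_add_eq_zero, ← sum_add_distrib]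
  simp only [Nat.add_sub_cancel]
  calc ∑ k ∈ range N, (v k * (b (k + 1) - b k) + b (k + 1) * (v (k + 1) - v k))
      = ∑ k ∈ range N, (v (k + 1) * b (k + 1) - v k * b k) := sum_congr rfl fun k _ => by ring
    _ = 0 := by rw [sum_range_sub (fun k => v k * b k), hv₀, hvN]; ring

theorem sum_range_natCast_le_sq_div_two (n : ℕ) : ∑ i ∈ range n, (i : ℝ) ≤ n ^ 2 / 2 := by
  induction n with
  | zero => simp
  | succ n ih =>
    rw [sum_range_succ]
    push_cast
    nlinarith

/-- Discrete Friedrichs inequality. -/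
theorem sum_sq_le_sum_sq_backDiff {v : ℕ → ℝ} (hv₀ : v 0 = 0) {h : ℝ} (hh : 0 < h) :
    ∑ i ∈ Icc 1 (N - 1), h * v i ^ 2 ≤
      (N * h) ^ 2 / 2 * ∑ i ∈ Icc 1 N, h * ((v i - v (i - 1)) / h) ^ 2 := by
  set S := ∑ k ∈ range N, (v (k + 1) - v k) ^ 2
  have hgrad : ∑ i ∈ Icc 1 N, h * ((v i - v (i - 1)) / h) ^ 2 = S / h := by
    rw [sum_Icc_one_eq_sum_range, sum_div]
    refine sum_congr rfl fun k _ => ?_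
    rw [Nat.add_sub_cancel]
    field_simp
  have hpoint : ∀ i ∈ range N, v i ^ 2 ≤ i * S := by
    intro i hi
    calc v i ^ 2 = (∑ k ∈ range i, (v (k + 1) - v k)) ^ 2 := by rw [sum_range_sub, hv₀, sub_zero]
      _ ≤ i * ∑ k ∈ range i, (v (k + 1) - v k) ^ 2 := by
        simpa using sq_sum_le_card_mul_sum_sq (s := range i) (f := fun k => v (k + 1) - v k)
      _ ≤ i * S := by
        gcongr
        exact sum_le_sum_of_subset_of_nonneg (range_mono (mem_range.1 hi).le)
          fun _ _ _ => sq_nonneg _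
  calc ∑ i ∈ Icc 1 (N - 1), h * v i ^ 2 = ∑ i ∈ range N, h * v i ^ 2 :=
        sum_Icc_one_sub_one_eq_sum_range (by simp [hv₀])
    _ ≤ ∑ i ∈ range N, h * (i * S) := sum_le_sum fun i hi => by gcongr; exact hpoint i hi
    _ = h * S * ∑ i ∈ range N, (i : ℝ) := by
        rw [mul_sum]
        exact sum_congr rfl fun _ _ => by ring
    _ ≤ h * S * (N ^ 2 / 2) := by
        gcongr
        exact sum_range_natCast_le_sq_div_two N
    _ = (N * h) ^ 2 / 2 * ∑ i ∈ Icc 1 N, h * ((v i - v (i - 1)) / h) ^ 2 := by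
        rw [hgrad]
        field_simp

theorem two_mul_sum_mul_le {v : ℕ → ℝ} (hv₀ : v 0 = 0) (hN : 0 < N) {h c : ℝ} (hh : 0 < h)
    (hc : 0 < c) (φ : ℕ → ℝ) :
    2 * ∑ i ∈ Icc 1 (N - 1), h * (v i * φ i) ≤
      c * ∑ i ∈ Icc 1 N, h * ((v i - v (i - 1)) / h) ^ 2 +
        (N * h) ^ 2 / (2 * c) * ∑ i ∈ Icc 1 (N - 1), h * φ i ^ 2 := by
  set ε := 2 * c / (N * h) ^ 2
  have hε : 0 < ε := by positivity
  have hyoung : ∀ i, 2 * (h * (v i * φ i)) ≤ ε * (h * v i ^ 2) + ε⁻¹ * (h * φ i ^ 2) := by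
    intro i
    have hsq : ε * (h * v i ^ 2) + ε⁻¹ * (h * φ i ^ 2) - 2 * (h * (v i * φ i)) =
        h * (ε * v i - φ i) ^ 2 / ε := by
      field_simp
      ring
    have : 0 ≤ h * (ε * v i - φ i) ^ 2 / ε := by positivity
    linarith
  calc 2 * ∑ i ∈ Icc 1 (N - 1), h * (v i * φ i)
      ≤ ∑ i ∈ Icc 1 (N - 1), (ε * (h * v i ^ 2) + ε⁻¹ * (h * φ i ^ 2)) := by
        rw [mul_sum]
        exact sum_le_sum fun i _ => hyoung i
    _ = ε * ∑ i ∈ Icc 1 (N - 1), h * v i ^ 2 + ε⁻¹ * ∑ i ∈ Icc 1 (N - 1), h * φ i ^ 2 := by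
        rw [sum_add_distrib, mul_sum, mul_sum]
    _ ≤ ε * ((N * h) ^ 2 / 2 * ∑ i ∈ Icc 1 N, h * ((v i - v (i - 1)) / h) ^ 2) +
          ε⁻¹ * ∑ i ∈ Icc 1 (N - 1), h * φ i ^ 2 := by
        gcongr
        exact sum_sq_le_sum_sq_backDiff hv₀ hh
    _ = _ := by
        have : (N : ℝ) * h ≠ 0 := by positivity
        simp only [ε]
        field_simp

/-- The difference operator `Λ` of the scheme. -/
noncomputable def gridOperator (h : ℝ) (a d v : ℕ → ℝ) (i : ℕ) : ℝ :=
  (a (i + 1) * (v (i + 1) - v i) / h - a i * (v i - v (i - 1)) / h) / h - d i * v i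

theorem sum_mul_gridOperator_le {a d v : ℕ → ℝ} {h c : ℝ} (hh : 0 < h)
    (ha : ∀ i, 1 ≤ i → i ≤ N → c ≤ a i) (hd : ∀ i, 1 ≤ i → i ≤ N - 1 → 0 ≤ d i)
    (hv₀ : v 0 = 0) (hvN : v N = 0) :
    ∑ i ∈ Icc 1 (N - 1), h * (v i * gridOperator h a d v i) ≤
      -(c * ∑ i ∈ Icc 1 N, h * ((v i - v (i - 1)) / h) ^ 2) := by
  set b : ℕ → ℝ := fun i => a i * (v i - v (i - 1)) / h
  have hsplit : ∑ i ∈ Icc 1 (N - 1), h * (v i * gridOperator h a d v i) =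
      ∑ i ∈ Icc 1 (N - 1), v i * (b (i + 1) - b i) - ∑ i ∈ Icc 1 (N - 1), h * (d i * v i ^ 2) := by
    rw [← sum_sub_distrib]
    refine sum_congr rfl fun i _ => ?_
    simp only [gridOperator, b, Nat.add_sub_cancel]
    field_simp
  have hflux : c * ∑ i ∈ Icc 1 N, h * ((v i - v (i - 1)) / h) ^ 2 ≤
      ∑ i ∈ Icc 1 N, b i * (v i - v (i - 1)) := by
    rw [mul_sum]
    refine sum_le_sum fun i hi => ?_
    obtain ⟨hi₁, hiN⟩ := mem_Icc.1 hi
    calc c * (h * ((v i - v (i - 1)) / h) ^ 2) ≤ a i * (h * ((v i - v (i - 1)) / h) ^ 2) := by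
          gcongr
          exact ha i hi₁ hiN
      _ = b i * (v i - v (i - 1)) := by
          simp only [b]
          field_simp
  have hreaction : 0 ≤ ∑ i ∈ Icc 1 (N - 1), h * (d i * v i ^ 2) := by
    refine sum_nonneg fun i hi => ?_
    have := hd i (mem_Icc.1 hi).1 (mem_Icc.1 hi).2
    positivity
  rw [hsplit, sum_Icc_mul_sub_eq_neg hv₀ hvN]
  linarith

theorem gridOperator_energy_estimate {a d v φ g : ℕ → ℝ} {h c : ℝ} (hN : 0 < N) (hh : 0 < h) (hc : 0 < c)
    (ha : ∀ i, 1 ≤ i → i ≤ N → c ≤ a i) (hd : ∀ i, 1 ≤ i → i ≤ N - 1 → 0 ≤ d i)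
    (hv₀ : v 0 = 0) (hvN : v N = 0)
    (hg : ∀ i, 1 ≤ i → i ≤ N - 1 → g i = gridOperator h a d v i + φ i) :
    2 * ∑ i ∈ Icc 1 (N - 1), h * (v i * g i) + c * ∑ i ∈ Icc 1 N, h * ((v i - v (i - 1)) / h) ^ 2 ≤
      (N * h) ^ 2 / (2 * c) * ∑ i ∈ Icc 1 (N - 1), h * φ i ^ 2 := by
  have hsum : ∑ i ∈ Icc 1 (N - 1), h * (v i * g i) =
      ∑ i ∈ Icc 1 (N - 1), h * (v i * gridOperator h a d v i) +
        ∑ i ∈ Icc 1 (N - 1), h * (v i * φ i) := by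
    rw [← sum_add_distrib]
    refine sum_congr rfl fun i hi => ?_
    rw [hg i (mem_Icc.1 hi).1 (mem_Icc.1 hi).2]
    ring
  rw [hsum]
  linarith [sum_mul_gridOperator_le hh ha hd hv₀ hvN, two_mul_sum_mul_le hv₀ hN hh hc φ]

end Grid

theorem sum_range_mul_sum_dCaputo {τ : ℝ} (hτ : τ ≠ 0) {α : ℕ → ℝ} {I : Finset ℕ}
    (hα : ∀ i ∈ I, α i ≠ 1) (h : ℝ) (W : ℕ → ℕ → ℝ) (j : ℕ) :
    ∑ j' ∈ range (j + 1), τ * ∑ i ∈ I, h * dCaputo (α i) τ (W i) j' =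
      ∑ i ∈ I, h * (1 / Real.Gamma (2 - α i) *
        ∑ s ∈ range (j + 1), caputoWeight (α i) τ (j - s) * W i (s + 1)) -
      ∑ i ∈ I, h * ((((j + 1 : ℕ) : ℝ) * τ) ^ (1 - α i) / Real.Gamma (2 - α i)) * W i 0 := by
  have hswap : ∀ j', τ * ∑ i ∈ I, h * dCaputo (α i) τ (W i) j' =
      ∑ i ∈ I, h * (τ * dCaputo (α i) τ (W i) j') := fun j' => by
    rw [mul_sum]
    exact sum_congr rfl fun _ _ => by ring
  rw [sum_congr rfl fun j' _ => hswap j', sum_comm, ← sum_sub_distrib]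
  refine sum_congr rfl fun i hi => ?_
  rw [← mul_sum, ← mul_sum, mul_sum_range_dCaputo hτ (hα i hi)]
  ring

theorem scheme_level_energy_estimate {N j : ℕ} (hN : 0 < N) {h τ c σ : ℝ} (hh : 0 < h)
    (hτ : 0 < τ) (hc : 0 < c) {α : ℕ → ℝ} (hα : ∀ i, 1 ≤ i → i ≤ N - 1 → 0 ≤ α i ∧ α i < 1)
    (hσ : ∀ i, 1 ≤ i → i ≤ N - 1 →
      σ ^ 2 * caputoWeight (α i) τ 1 ≤ (2 * σ - 1) * caputoWeight (α i) τ 0)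
    {a d φ : ℕ → ℝ} (ha : ∀ i, 1 ≤ i → i ≤ N → c ≤ a i)
    (hd : ∀ i, 1 ≤ i → i ≤ N - 1 → 0 ≤ d i) {y : ℕ → ℕ → ℝ}
    (hbc : ∀ s, j ≤ s → s ≤ j + 1 → y 0 s = 0 ∧ y N s = 0)
    (hscheme : ∀ i, 1 ≤ i → i ≤ N - 1 → dCaputo (α i) τ (y i) j =
      gridOperator h a d (fun i => σ * y i (j + 1) + (1 - σ) * y i j) i + φ i) :
    ∑ i ∈ Icc 1 (N - 1), h * dCaputo (α i) τ (fun s => y i s ^ 2) j +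
        c * ∑ i ∈ Icc 1 N, h * ((σ * y i (j + 1) + (1 - σ) * y i j -
          (σ * y (i - 1) (j + 1) + (1 - σ) * y (i - 1) j)) / h) ^ 2 ≤
      (N * h) ^ 2 / (2 * c) * ∑ i ∈ Icc 1 (N - 1), h * φ i ^ 2 := by
  have hcaputo : ∑ i ∈ Icc 1 (N - 1), h * dCaputo (α i) τ (fun s => y i s ^ 2) j ≤
      2 * ∑ i ∈ Icc 1 (N - 1),
        h * ((σ * y i (j + 1) + (1 - σ) * y i j) * dCaputo (α i) τ (y i) j) := by
    rw [mul_sum]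
    refine sum_le_sum fun i hi => ?_
    obtain ⟨hi₁, hiN⟩ := mem_Icc.1 hi
    have := dCaputo_sq_le hτ (hα i hi₁ hiN).1 (hα i hi₁ hiN).2 (hσ i hi₁ hiN) (y i) j
    nlinarith
  have henergy := gridOperator_energy_estimate hN hh hc ha hd
    (by simp [(hbc j le_rfl j.le_succ).1, (hbc (j + 1) j.le_succ le_rfl).1])
    (by simp [(hbc j le_rfl j.le_succ).2, (hbc (j + 1) j.le_succ le_rfl).2]) hscheme
  linarith

theorem scheme_apriori_estimate {N j : ℕ} (hN : 0 < N) {h τ c σ : ℝ} (hh : 0 < h)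
    (hτ : 0 < τ) (hc : 0 < c) {α : ℕ → ℝ} (hα : ∀ i, 1 ≤ i → i ≤ N - 1 → 0 ≤ α i ∧ α i < 1)
    (hσ : ∀ i, 1 ≤ i → i ≤ N - 1 →
      σ ^ 2 * caputoWeight (α i) τ 1 ≤ (2 * σ - 1) * caputoWeight (α i) τ 0)
    {a d φ : ℕ → ℕ → ℝ} (ha : ∀ j' ≤ j, ∀ i, 1 ≤ i → i ≤ N → c ≤ a i j')
    (hd : ∀ j' ≤ j, ∀ i, 1 ≤ i → i ≤ N - 1 → 0 ≤ d i j') {y : ℕ → ℕ → ℝ}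
    (hbc : ∀ s ≤ j + 1, y 0 s = 0 ∧ y N s = 0)
    (hscheme : ∀ j' ≤ j, ∀ i, 1 ≤ i → i ≤ N - 1 → dCaputo (α i) τ (y i) j' =
      gridOperator h (a · j') (d · j') (fun i => σ * y i (j' + 1) + (1 - σ) * y i j') i + φ i j') :
    ∑ i ∈ Icc 1 (N - 1), h * (1 / Real.Gamma (2 - α i) *
        ∑ s ∈ range (j + 1), caputoWeight (α i) τ (j - s) * y i (s + 1) ^ 2) +
      c * ∑ j' ∈ range (j + 1), (∑ i ∈ Icc 1 N, h * ((σ * y i (j' + 1) + (1 - σ) * y i j' -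
          (σ * y (i - 1) (j' + 1) + (1 - σ) * y (i - 1) j')) / h) ^ 2) * τ ≤
      (N * h) ^ 2 / (2 * c) * ∑ j' ∈ range (j + 1), (∑ i ∈ Icc 1 (N - 1), h * φ i j' ^ 2) * τ +
      ∑ i ∈ Icc 1 (N - 1), h * ((((j + 1 : ℕ) : ℝ) * τ) ^ (1 - α i) / Real.Gamma (2 - α i)) *
        y i 0 ^ 2 := by
  have hlevel : ∀ j' ∈ range (j + 1),
      τ * ∑ i ∈ Icc 1 (N - 1), h * dCaputo (α i) τ (fun s => y i s ^ 2) j' +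
        c * ((∑ i ∈ Icc 1 N, h * ((σ * y i (j' + 1) + (1 - σ) * y i j' -
          (σ * y (i - 1) (j' + 1) + (1 - σ) * y (i - 1) j')) / h) ^ 2) * τ) ≤
      (N * h) ^ 2 / (2 * c) * ((∑ i ∈ Icc 1 (N - 1), h * φ i j' ^ 2) * τ) := by
    intro j' hj'
    have hj'j : j' ≤ j := Nat.lt_succ_iff.1 (mem_range.1 hj')
    have := scheme_level_energy_estimate hN hh hτ hc hα hσ (ha j' hj'j) (hd j' hj'j)
      (fun s _ hs => hbc s (by omega)) (hscheme j' hj'j)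
    linarith [mul_le_mul_of_nonneg_left this hτ.le]
  have htelescope := sum_range_mul_sum_dCaputo hτ.ne'
    (fun i hi => (hα i (mem_Icc.1 hi).1 (mem_Icc.1 hi).2).2.ne) h (fun i s => y i s ^ 2) j
  have hsum := sum_le_sum hlevel
  rw [sum_add_distrib, htelescope, ← mul_sum (range (j + 1)) _ c,
    ← mul_sum (range (j + 1)) _ ((N * h) ^ 2 / (2 * c))] at hsum
  linarith

/-- Theorem 3: a priori estimate (27) for the weighted difference scheme
(19)–(21) for the Dirichlet problem, valid for
`σ ≥ 1/(3 − 2^{1−min_i α_i})`.  Here `y i j ≈ u(x_i, t_j)`, `h = l/N`,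
`τ = T/j₀`, and `a i j`, `d i j`, `φ i j` are the coefficients of the
difference operator `Λ` and the right-hand side at the time level `t_{j+1/2}`. -/
theorem dirichlet_scheme_apriori_estimate
    (l T c₁ σ : ℝ) (N j₀ : ℕ) (hN : 2 ≤ N) (hj₀ : 0 < j₀)
    (hl : 0 < l) (hT : 0 < T) (hc₁ : 0 < c₁)
    (h τ : ℝ) (hh : h = l / N) (hτ : τ = T / j₀)
    (α : ℕ → ℝ) (hα : ∀ i ≤ N, 0 < α i ∧ α i < 1)
    (a d φ : ℕ → ℕ → ℝ)
    (ha : ∀ j < j₀, ∀ i, 1 ≤ i → i ≤ N → c₁ ≤ a i j)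
    (hd : ∀ j < j₀, ∀ i, 1 ≤ i → i ≤ N - 1 → 0 ≤ d i j)
    (hσ1 : 1 / (3 - (2:ℝ) ^ ((1:ℝ) -
      (Finset.range (N + 1)).inf' (Finset.nonempty_range_iff.mpr (Nat.succ_ne_zero N)) α)) ≤ σ)
    (hσ2 : σ ≤ 1)
    (y : ℕ → ℕ → ℝ) (u₀ : ℝ → ℝ)
    -- the difference scheme (19):
    (hscheme : ∀ j < j₀, ∀ i, 1 ≤ i → i ≤ N - 1 →
      dCaputo (α i) τ (fun s => y i s) j =
        ((a (i + 1) j * ((σ * y (i + 1) (j + 1) + (1 - σ) * y (i + 1) j) -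
            (σ * y i (j + 1) + (1 - σ) * y i j)) / h -
          a i j * ((σ * y i (j + 1) + (1 - σ) * y i j) -
            (σ * y (i - 1) (j + 1) + (1 - σ) * y (i - 1) j)) / h) / h -
          d i j * (σ * y i (j + 1) + (1 - σ) * y i j)) + φ i j)
    -- boundary conditions (20):
    (hbc : ∀ j ≤ j₀, y 0 j = 0 ∧ y N j = 0)
    -- initial condition (21):
    (hic : ∀ i ≤ N, y i 0 = u₀ (i * h)) :
    ∀ j < j₀,
      (∑ i ∈ Finset.Icc 1 (N - 1), h * ((1 / Real.Gamma (2 - α i)) *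
        ∑ j' ∈ Finset.range (j + 1),
          (((((j : ℕ) - j' + 1 : ℕ) : ℝ) * τ) ^ (1 - α i) -
            ((((j : ℕ) - j' : ℕ) : ℝ) * τ) ^ (1 - α i)) * (y i (j' + 1)) ^ 2)) +
      c₁ * ∑ j' ∈ Finset.range (j + 1),
        (∑ i ∈ Finset.Icc 1 N, h *
          (((σ * y i (j' + 1) + (1 - σ) * y i j') -
            (σ * y (i - 1) (j' + 1) + (1 - σ) * y (i - 1) j')) / h) ^ 2) * τ ≤
      l ^ 2 / (2 * c₁) * ∑ j' ∈ Finset.range (j + 1),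
        (∑ i ∈ Finset.Icc 1 (N - 1), h * (φ i j') ^ 2) * τ +
      ∑ i ∈ Finset.Icc 1 (N - 1), h *
        ((((j + 1 : ℕ) : ℝ) * τ) ^ (1 - α i) / Real.Gamma (2 - α i)) *
          (u₀ (i * h)) ^ 2 := by
  intro j hj
  have hN₀ : 0 < N := by omega
  have hτ₀ : 0 < τ := hτ ▸ div_pos hT (Nat.cast_pos.2 hj₀)
  have hh₀ : 0 < h := hh ▸ div_pos hl (Nat.cast_pos.2 hN₀)
  have hNh : (N : ℝ) * h = l := by rw [hh]; field_simp
  have hαmin : 0 < (Finset.range (N + 1)).inf'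
      (Finset.nonempty_range_iff.mpr (Nat.succ_ne_zero N)) α :=
    (lt_inf'_iff _).2 fun k hk => (hα k (Nat.lt_succ_iff.1 (mem_range.1 hk))).1
  have hinit : ∑ i ∈ Icc 1 (N - 1), h *
        ((((j + 1 : ℕ) : ℝ) * τ) ^ (1 - α i) / Real.Gamma (2 - α i)) * u₀ (i * h) ^ 2 =
      ∑ i ∈ Icc 1 (N - 1), h *
        ((((j + 1 : ℕ) : ℝ) * τ) ^ (1 - α i) / Real.Gamma (2 - α i)) * y i 0 ^ 2 :=
    sum_congr rfl fun i hi => by rw [hic i (by have := (mem_Icc.1 hi).2; omega)]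
  rw [hinit, ← hNh]
  exact scheme_apriori_estimate hN₀ hh₀ hτ₀ hc₁
    (fun i _ hi => ⟨(hα i (by omega)).1.le, (hα i (by omega)).2⟩)
    (fun i _ hi => sq_mul_caputoWeight_one_le hτ₀.le (hα i (by omega)).2.ne <|
      two_rpow_sub_one_mul_sq_le hαmin (inf'_le _ (mem_range.2 (by omega)))
        (hα i (by omega)).2.le hσ1 hσ2)
    (fun j' hj' => ha j' (by omega)) (fun j' hj' => hd j' (by omega))
    (fun s hs => hbc s (by omega)) (fun j' hj' => hscheme j' (by omega))
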